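/- arXiv:2206.09522 — 5 statements merged into one kernel-verified Lean document; each statement's English description precedes it below -/
import Mathlib

section
/- For any events A_1, ..., A_K that are pairwise disjoint, any random variable Q taking values in [0,1], and thresholds 0 = α_0 < α_1 < ... < α_K, the sum Σ_{ℓ=1}^K Σ_{j=1}^{ℓ} (1/ℓ) P({Q ∈ (α_{j-1}, α_j]} ∩ A_ℓ) is at most Σ_{j=1}^K (1/j)·(P(Q ≤ α_j) - P(Q ≤ α_{j-1})). -/
open MeasureTheory Finset

theorem Finset.sum_Icc_sum_Icc_comm {M : Type*} [AddCommMonoid M] (a n : ℕ) (f : ℕ → ℕ → M) :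
    ∑ i ∈ Icc a n, ∑ j ∈ Icc a i, f i j = ∑ j ∈ Icc a n, ∑ i ∈ Icc j n, f i j :=
  sum_comm' fun i j => by simp only [mem_Icc]; omega

section

variable {Ω : Type*} [MeasurableSpace Ω] {μ : Measure Ω} [IsFiniteMeasure μ]

theorem MeasureTheory.sum_measureReal_inter_le {ι : Type*} {s : Finset ι} {A : ι → Set Ω}
    (hA : ∀ i ∈ s, MeasurableSet (A i)) (hdisj : (s : Set ι).PairwiseDisjoint A) (S : Set Ω) :
    ∑ i ∈ s, μ.real (S ∩ A i) ≤ μ.real S :=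
  calc ∑ i ∈ s, μ.real (S ∩ A i)
      = ∑ i ∈ s, (μ.restrict S).real (A i) :=
        sum_congr rfl fun i hi => by rw [measureReal_restrict_apply (hA i hi), Set.inter_comm]
    _ ≤ (μ.restrict S).real Set.univ := sum_measureReal_le_measureReal_univ hA hdisj
    _ = μ.real S := measureReal_restrict_apply_univ S

theorem MeasureTheory.measureReal_preimage_Ioc {α : Type*} [LinearOrder α] [TopologicalSpace α]
    [OrderClosedTopology α] [MeasurableSpace α] [OpensMeasurableSpace α] {f : Ω → α}
    (hf : Measurable f) {a b : α} (hab : a ≤ b) :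
    μ.real {ω | f ω ∈ Set.Ioc a b} = μ.real {ω | f ω ≤ b} - μ.real {ω | f ω ≤ a} := by
  have hstrip : {ω | f ω ∈ Set.Ioc a b} = {ω | f ω ≤ b} \ {ω | f ω ≤ a} := by
    ext ω
    simp only [Set.mem_ofPred_eq, Set.mem_Ioc, Set.mem_sdiff, not_le, and_comm]
  have hsub : {ω | f ω ≤ a} ⊆ {ω | f ω ≤ b} := fun ω hω => le_trans hω hab
  rw [hstrip, measureReal_sdiff hsub (hf measurableSet_Iic)]

end

theorem stmt6_general {Ω : Type*} [MeasurableSpace Ω] (μ : Measure Ω) [IsProbabilityMeasure μ]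
    (K : ℕ) (A : ℕ → Set Ω) (hA : ∀ ℓ, MeasurableSet (A ℓ))
    (hdisj : ∀ ℓ ℓ', ℓ ≠ ℓ' → Disjoint (A ℓ) (A ℓ'))
    (Q : Ω → ℝ) (hQ : Measurable Q)
    (α : ℕ → ℝ) (hmono : StrictMonoOn α (Set.Icc 0 K)) :
    ∑ ℓ ∈ Finset.Icc 1 K, ∑ j ∈ Finset.Icc 1 ℓ,
        (1 / (ℓ:ℝ)) * (μ ({ω | Q ω ∈ Set.Ioc (α (j-1)) (α j)} ∩ A ℓ)).toReal
      ≤ ∑ j ∈ Finset.Icc 1 K,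
        (1 / (j:ℝ)) * ((μ {ω | Q ω ≤ α j}).toReal - (μ {ω | Q ω ≤ α (j-1)}).toReal) := by
  set S : ℕ → Set Ω := fun j => {ω | Q ω ∈ Set.Ioc (α (j-1)) (α j)}
  simp only [← measureReal_def]
  calc ∑ ℓ ∈ Icc 1 K, ∑ j ∈ Icc 1 ℓ, 1 / (ℓ:ℝ) * μ.real (S j ∩ A ℓ)
      = ∑ j ∈ Icc 1 K, ∑ ℓ ∈ Icc j K, 1 / (ℓ:ℝ) * μ.real (S j ∩ A ℓ) :=
        sum_Icc_sum_Icc_comm 1 K _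
    _ ≤ ∑ j ∈ Icc 1 K, 1 / (j:ℝ) * ∑ ℓ ∈ Icc j K, μ.real (S j ∩ A ℓ) := by
        gcongr with j hj
        rw [mul_sum]
        gcongr with ℓ hℓ
        · exact_mod_cast (mem_Icc.mp hj).1
        · exact_mod_cast (mem_Icc.mp hℓ).1
    _ ≤ ∑ j ∈ Icc 1 K, 1 / (j:ℝ) * μ.real (S j) := by
        gcongr with j
        exact sum_measureReal_inter_le (fun ℓ _ => hA ℓ) (fun ℓ _ ℓ' _ => hdisj ℓ ℓ') (S j)
    _ = _ := sum_congr rfl fun j hj => by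
        obtain ⟨hj1, hjK⟩ := mem_Icc.mp hj
        have hstep : α (j-1) ≤ α j := (hmono ⟨Nat.zero_le _, by omega⟩
          ⟨j.zero_le, hjK⟩ (by omega)).le
        rw [measureReal_preimage_Ioc hQ hstep]

/-- Key counting inequality in the proof of FDR control under dependence. -/
theorem stmt6 {Ω : Type*} [MeasurableSpace Ω] (μ : Measure Ω) [IsProbabilityMeasure μ]
    (K : ℕ) (A : ℕ → Set Ω) (hA : ∀ ℓ, MeasurableSet (A ℓ))
    (hdisj : ∀ ℓ ℓ', ℓ ≠ ℓ' → Disjoint (A ℓ) (A ℓ'))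
    (Q : Ω → ℝ) (hQ : Measurable Q) (hQr : ∀ ω, Q ω ∈ Set.Icc (0:ℝ) 1)
    (α : ℕ → ℝ) (hα0 : α 0 = 0) (hmono : StrictMonoOn α (Set.Icc 0 K)) :
    ∑ ℓ ∈ Finset.Icc 1 K, ∑ j ∈ Finset.Icc 1 ℓ,
        (1 / (ℓ:ℝ)) * (μ ({ω | Q ω ∈ Set.Ioc (α (j-1)) (α j)} ∩ A ℓ)).toReal
      ≤ ∑ j ∈ Finset.Icc 1 K,
        (1 / (j:ℝ)) * ((μ {ω | Q ω ≤ α j}).toReal - (μ {ω | Q ω ≤ α (j-1)}).toReal) :=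
  stmt6_general μ K A hA hdisj Q hQ α hmono
end

section
/- BH procedure under arbitrary dependence controls FWER under the global null: Let Q^1, ..., Q^K be random variables in [0,1] each satisfying P(Q^i ≤ t) ≤ t for all t (super-uniform), with arbitrary joint dependence. Let Q^{(1)} ≤ ... ≤ Q^{(K)} be the order statistics and m = max{i : Q^{(i)} ≤ α·i/(H_K·K)} (with m = 0 if the set is empty), where H_K = Σ_{j=1}^K 1/j. Then P(m ≥ 1) ≤ α. -/
open MeasureTheory
open scoped ENNReal


lemma abel_aux (δ : ℝ) (b : ℕ → ℝ) (hb0 : b 0 = 0) :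
    ∀ n : ℕ, (∀ k ≤ n, b k ≤ δ * k) →
      (∑ k ∈ Finset.Icc 1 n, (b k - b (k-1))/k)
        ≤ δ * (∑ k ∈ Finset.Icc 1 n, (1:ℝ)/k) - (δ*n - b n)/n := by
  intro n
  induction n with
  | zero => simp [hb0]
  | succ n ih =>
    intro hbd
    have ih' := ih (fun k hk => hbd k (hk.trans (Nat.le_succ n)))
    rw [Finset.sum_Icc_succ_top (by norm_num : 1 ≤ n+1),
        Finset.sum_Icc_succ_top (by norm_num : 1 ≤ n+1)]
    have hx : 0 ≤ δ * n - b n := by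
      have := hbd n (Nat.le_succ n); linarith
    have h1 : (δ*n - b n)/(n+1) ≤ (δ*n - b n)/n := by
      rcases Nat.eq_zero_or_pos n with h|h
      · simp [h, hb0]
      · apply div_le_div_of_nonneg_left hx (by positivity)
        · exact_mod_cast Nat.le_succ n
    have hpos : (0:ℝ) < (n:ℝ)+1 := by positivity
    have h2 : (b (n+1) - b (n+1-1))/((n+1:ℕ):ℝ)
        = δ*(1/((n+1:ℕ):ℝ)) - (δ*((n+1:ℕ):ℝ) - b (n+1))/((n+1:ℕ):ℝ)
          + (δ*n - b n)/((n:ℝ)+1) := by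
      push_cast
      field_simp
      ring
    push_cast at h2 ⊢
    linarith [ih', h1, h2]



/-- BH procedure with the Benjamini–Yekutieli harmonic correction controls the FWER
under the global null for arbitrarily dependent super-uniform p-values. The event
m ≥ 1, i.e. Q^{(i)} ≤ α·i/(H_K·K) for some i, is equivalently that at least i of the
p-values are ≤ α·i/(H_K·K) for some 1 ≤ i ≤ K. -/
theorem stmt10 {Ω : Type*} [MeasurableSpace Ω] (μ : Measure Ω) [IsProbabilityMeasure μ]
    (K : ℕ) (hK : 0 < K) (Q : Fin K → Ω → ℝ)
    (hrange : ∀ i ω, Q i ω ∈ Set.Icc (0:ℝ) 1)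
    (hsup : ∀ i, ∀ t ∈ Set.Icc (0:ℝ) 1, μ {ω | Q i ω ≤ t} ≤ ENNReal.ofReal t)
    (α : ℝ) (hα : α ∈ Set.Ioo (0:ℝ) 1)
    (H : ℝ) (hH : H = ∑ j ∈ Finset.Icc 1 K, (1:ℝ)/j) :
    μ {ω | ∃ i ∈ Finset.Icc 1 K,
        i ≤ (Finset.univ.filter (fun j : Fin K => Q j ω ≤ α * i / (H * K))).card}
      ≤ ENNReal.ofReal α := by
  classical
  obtain ⟨hα0, hα1⟩ := hα
  have hK1 : (1:ℝ) ≤ H := by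
    rw [hH]
    have h := Finset.single_le_sum (f := fun j : ℕ => (1:ℝ)/j)
      (fun j _ => by positivity) (Finset.mem_Icc.2 ⟨le_refl 1, hK⟩)
    simpa using h
  have hH0 : (0:ℝ) < H := lt_of_lt_of_le one_pos hK1
  have hKR : (0:ℝ) < K := by exact_mod_cast hK
  set δ : ℝ := α / (H * K) with hδdef
  have hδ0 : 0 < δ := by positivity
  have hc_mem : ∀ k ≤ K, δ * k ∈ Set.Icc (0:ℝ) 1 := by
    intro k hk
    constructor
    · positivity
    · have h1 : δ * k ≤ δ * K := by
        apply mul_le_mul_of_nonneg_left _ hδ0.le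
        exact_mod_cast hk
      have h2 : δ * K = α / H := by
        rw [hδdef]; field_simp
      have h3 : α / H ≤ α := by
        rw [div_le_iff₀ hH0]; nlinarith
      linarith
  -- the cumulative measurable hulls
  set S : Fin K → ℕ → Set Ω := fun j k => {ω | Q j ω ≤ δ * k} with hSdef
  set U : Fin K → ℕ → Set Ω :=
    fun j k => ⋂ l ∈ Finset.Icc k K, toMeasurable μ (S j l) with hUdef
  have hUmeas : ∀ j k, MeasurableSet (U j k) := fun j k =>
    MeasurableSet.biInter (Finset.Icc k K).countable_toSet
      (fun l _ => measurableSet_toMeasurable μ (S j l))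
  have hSU : ∀ j k, S j k ⊆ U j k := by
    intro j k
    apply Set.subset_iInter₂
    intro l hl
    refine (fun ω hω => subset_toMeasurable μ (S j l) ?_)
    have hkl : k ≤ l := (Finset.mem_Icc.1 hl).1
    have : δ * k ≤ δ * l := by
      apply mul_le_mul_of_nonneg_left _ hδ0.le; exact_mod_cast hkl
    exact le_trans hω this
  have hUle : ∀ j k, k ≤ K → μ (U j k) ≤ ENNReal.ofReal (δ * k) := by
    intro j k hk
    calc μ (U j k) ≤ μ (toMeasurable μ (S j k)) := by
          apply measure_mono
          exact Set.iInter₂_subset k (Finset.mem_Icc.2 ⟨le_refl k, hk⟩)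
      _ = μ (S j k) := measure_toMeasurable _
      _ ≤ ENNReal.ofReal (δ * k) := hsup j _ (hc_mem k hk)
  have hUmono : ∀ j k k', k ≤ k' → U j k ⊆ U j k' := by
    intro j k k' hkk'
    intro ω hω
    rw [hUdef, Set.mem_iInter₂] at hω ⊢
    intro l hl
    rw [Finset.mem_Icc] at hl
    exact hω l (Finset.mem_Icc.2 ⟨hkk'.trans hl.1, hl.2⟩)
  have hU0 : ∀ j, μ (U j 0) = 0 := by
    intro j
    have := hUle j 0 (Nat.zero_le K)
    simpa using this
  -- slices
  set V : Fin K → ℕ → Set Ω := fun j k => U j k \ U j (k-1) with hVdef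
  have hVmeas : ∀ j k, MeasurableSet (V j k) := fun j k =>
    (hUmeas j k).diff (hUmeas j (k-1))
  have hUV : ∀ j i, U j i ⊆ U j 0 ∪ ⋃ k ∈ Finset.Icc 1 i, V j k := by
    intro j i
    induction i with
    | zero => simp
    | succ i ih =>
      intro ω hω
      by_cases h : ω ∈ U j i
      · rcases ih h with h' | h'
        · exact Or.inl h'
        · refine Or.inr ?_
          rw [Set.mem_iUnion₂] at h' ⊢
          obtain ⟨k, hk, hωk⟩ := h'
          rw [Finset.mem_Icc] at hk
          exact ⟨k, Finset.mem_Icc.2 ⟨hk.1, hk.2.trans (Nat.le_succ i)⟩, hωk⟩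
      · refine Or.inr ?_
        rw [Set.mem_iUnion₂]
        refine ⟨i+1, Finset.mem_Icc.2 ⟨Nat.succ_le_succ (Nat.zero_le i), le_refl _⟩, ?_⟩
        rw [hVdef]
        exact ⟨hω, by simpa using h⟩
  -- counting events
  set F : ℕ → Set Ω :=
    fun i => {ω | i ≤ (Finset.univ.filter (fun j : Fin K => ω ∈ U j i)).card} with hFdef
  have hcount : ∀ i : ℕ,
      Measurable (fun ω => (Finset.univ.filter (fun j : Fin K => ω ∈ U j i)).card) := by
    intro i
    have heq : (fun ω => (Finset.univ.filter (fun j : Fin K => ω ∈ U j i)).card)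
        = fun ω => ∑ j : Fin K, if ω ∈ U j i then 1 else 0 := by
      funext ω; rw [Finset.card_filter]
    rw [heq]
    exact Finset.measurable_sum _ fun j _ =>
      Measurable.ite (hUmeas j i) measurable_const measurable_const
  have hFmeas : ∀ i, MeasurableSet (F i) := by
    intro i
    have : F i = (fun ω => (Finset.univ.filter (fun j : Fin K => ω ∈ U j i)).card) ⁻¹'
        (Set.Ici i) := rfl
    rw [this]
    exact hcount i (measurableSet_Ici)
  set G : ℕ → Set Ω := fun i => F i \ ⋃ l ∈ Finset.Ioc i K, F l with hGdef
  have hGmeas : ∀ i, MeasurableSet (G i) := fun i =>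
    (hFmeas i).diff (MeasurableSet.biUnion (Finset.Ioc i K).countable_toSet
      fun l _ => hFmeas l)
  have hGsubF : ∀ i, G i ⊆ F i := fun i => Set.diff_subset
  have hGdisj0 : ∀ i i', i < i' → i' ≤ K → Disjoint (G i) (G i') := by
    intro i i' h hK' 
    rw [Set.disjoint_left]
    intro ω hω hω'
    exact hω.2 (Set.mem_biUnion (Finset.mem_Ioc.2 ⟨h, hK'⟩) (hGsubF i' hω'))
  have hGdisj : ∀ i i', i ≠ i' → i ≤ K → i' ≤ K → Disjoint (G i) (G i') := by
    intro i i' hne hi hi'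
    rcases Nat.lt_or_ge i i' with h | h
    · exact hGdisj0 i i' h hi'
    · exact (hGdisj0 i' i (lt_of_le_of_ne h (Ne.symm hne)) hi).symm
  -- counting lemma
  have key_count : ∀ i : ℕ, (i:ℝ≥0∞) * μ (G i) ≤ ∑ j : Fin K, μ (U j i ∩ G i) := by
    intro i
    have hpt : ∀ ω, (G i).indicator (fun _ => (i:ℝ≥0∞)) ω
        ≤ ∑ j : Fin K, (U j i ∩ G i).indicator (fun _ => (1:ℝ≥0∞)) ω := by
      intro ω
      by_cases hω : ω ∈ G i
      · rw [Set.indicator_of_mem hω]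
        have hωF : i ≤ (Finset.univ.filter (fun j : Fin K => ω ∈ U j i)).card := hω.1
        have h2 : ∑ j : Fin K, (U j i ∩ G i).indicator (fun _ => (1:ℝ≥0∞)) ω
            = ((Finset.univ.filter (fun j : Fin K => ω ∈ U j i)).card : ℝ≥0∞) := by
          rw [Finset.card_filter]
          push_cast
          apply Finset.sum_congr rfl
          intro j _
          by_cases hj : ω ∈ U j i
          · simp [Set.indicator_apply, hj, hω, Set.mem_inter_iff]
          · simp [Set.indicator_apply, hj, Set.mem_inter_iff]
        rw [h2]
        exact_mod_cast hωF
      · rw [Set.indicator_of_notMem hω]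
        exact zero_le
    calc (i:ℝ≥0∞) * μ (G i)
        = ∫⁻ ω, (G i).indicator (fun _ => (i:ℝ≥0∞)) ω ∂μ := by
          rw [lintegral_indicator_const (hGmeas i)]
      _ ≤ ∫⁻ ω, ∑ j : Fin K, (U j i ∩ G i).indicator (fun _ => (1:ℝ≥0∞)) ω ∂μ :=
          lintegral_mono hpt
      _ = ∑ j : Fin K, ∫⁻ ω, (U j i ∩ G i).indicator (fun _ => (1:ℝ≥0∞)) ω ∂μ := by
          apply lintegral_finset_sum
          intro j _
          exact (measurable_const.indicator ((hUmeas j i).inter (hGmeas i)))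
      _ = ∑ j : Fin K, μ (U j i ∩ G i) := by
          apply Finset.sum_congr rfl
          intro j _
          rw [show (fun _ : Ω => (1:ℝ≥0∞)) = fun _ => (1:ℝ≥0∞) from rfl,
            lintegral_indicator_const ((hUmeas j i).inter (hGmeas i)), one_mul]
  -- per-i bound
  have hGbound : ∀ i ∈ Finset.Icc 1 K, μ (G i)
      ≤ ∑ j : Fin K, ∑ k ∈ Finset.Icc 1 i, ((k:ℝ≥0∞))⁻¹ * μ (V j k ∩ G i) := by
    intro i hi
    rw [Finset.mem_Icc] at hi
    have hi0 : (i:ℝ≥0∞) ≠ 0 := by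
      exact_mod_cast Nat.one_le_iff_ne_zero.1 hi.1
    have hitop : (i:ℝ≥0∞) ≠ ⊤ := ENNReal.natCast_ne_top i
    calc μ (G i) = (i:ℝ≥0∞)⁻¹ * ((i:ℝ≥0∞) * μ (G i)) := by
          rw [← mul_assoc, ENNReal.inv_mul_cancel hi0 hitop, one_mul]
      _ ≤ (i:ℝ≥0∞)⁻¹ * ∑ j : Fin K, μ (U j i ∩ G i) :=
          mul_le_mul_right (key_count i) _
      _ = ∑ j : Fin K, (i:ℝ≥0∞)⁻¹ * μ (U j i ∩ G i) := Finset.mul_sum _ _ _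
      _ ≤ ∑ j : Fin K, ∑ k ∈ Finset.Icc 1 i, ((k:ℝ≥0∞))⁻¹ * μ (V j k ∩ G i) := by
          apply Finset.sum_le_sum
          intro j _
          have hsub : U j i ∩ G i ⊆ U j 0 ∪ ⋃ k ∈ Finset.Icc 1 i, (V j k ∩ G i) := by
            intro ω hω
            rcases hUV j i hω.1 with h | h
            · exact Or.inl h
            · refine Or.inr ?_
              rw [Set.mem_iUnion₂] at h ⊢
              obtain ⟨k, hk, hωk⟩ := h
              exact ⟨k, hk, hωk, hω.2⟩
          calc (i:ℝ≥0∞)⁻¹ * μ (U j i ∩ G i)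
              ≤ (i:ℝ≥0∞)⁻¹ * (μ (U j 0) + ∑ k ∈ Finset.Icc 1 i, μ (V j k ∩ G i)) := by
                apply mul_le_mul_right
                refine le_trans (measure_mono hsub) ?_
                refine le_trans (measure_union_le _ _) ?_
                exact add_le_add_right (measure_biUnion_finset_le _ _) _
            _ = ∑ k ∈ Finset.Icc 1 i, (i:ℝ≥0∞)⁻¹ * μ (V j k ∩ G i) := by
                rw [hU0 j, zero_add, Finset.mul_sum]
            _ ≤ ∑ k ∈ Finset.Icc 1 i, ((k:ℝ≥0∞))⁻¹ * μ (V j k ∩ G i) := by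
                apply Finset.sum_le_sum
                intro k hk
                rw [Finset.mem_Icc] at hk
                have : (k:ℝ≥0∞) ≤ (i:ℝ≥0∞) := by exact_mod_cast hk.2
                exact mul_le_mul_left (ENNReal.inv_le_inv.2 this) _
  -- disjoint union bound
  have hVG : ∀ (j : Fin K) (k : ℕ), ∑ i ∈ Finset.Icc k K, μ (V j k ∩ G i) ≤ μ (V j k) := by
    intro j k
    rw [← measure_biUnion_finset ?_ (fun i _ => (hVmeas j k).inter (hGmeas i))]
    · exact measure_mono (Set.iUnion₂_subset fun i _ => Set.inter_subset_left)
    · intro i hi i' hi' hne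
      rw [Finset.mem_coe, Finset.mem_Icc] at hi hi'
      exact (hGdisj i i' hne hi.2 hi'.2).mono Set.inter_subset_right Set.inter_subset_right
  -- per-j Abel bound
  have hVb : ∀ j : Fin K,
      ∑ k ∈ Finset.Icc 1 K, ((k:ℝ≥0∞))⁻¹ * μ (V j k) ≤ ENNReal.ofReal (α / K) := by
    intro j
    set b : ℕ → ℝ := fun k => (μ (U j (min k K))).toReal with hbdef
    have hb0 : b 0 = 0 := by
      simp only [hbdef, Nat.zero_min]
      rw [hU0 j, ENNReal.toReal_zero]
    have hbd : ∀ k ≤ K, b k ≤ δ * k := by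
      intro k hk
      have h1 : min k K = k := min_eq_left hk
      have h2 := hUle j k hk
      have h3 : (μ (U j k)).toReal ≤ δ * k := by
        rw [← ENNReal.ofReal_toReal (measure_ne_top μ (U j k))] at h2
        have := (ENNReal.ofReal_le_ofReal_iff (by positivity)).1 h2
        exact this
      simpa [hbdef, h1] using h3
    have hVeq : ∀ k ∈ Finset.Icc 1 K, (μ (V j k)).toReal = b k - b (k-1) := by
      intro k hk
      rw [Finset.mem_Icc] at hk
      have h1 : min k K = k := min_eq_left hk.2
      have h2 : min (k-1) K = k-1 := min_eq_left (le_trans (Nat.sub_le k 1) hk.2)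
      have hd : μ (V j k) = μ (U j k) - μ (U j (k-1)) :=
        measure_diff (hUmono j (k-1) k (Nat.sub_le k 1))
          ((hUmeas j (k-1)).nullMeasurableSet) (measure_ne_top μ _)
      simp only [hbdef, h1, h2]
      rw [hd, ENNReal.toReal_sub_of_le
        (measure_mono (hUmono j (k-1) k (Nat.sub_le k 1))) (measure_ne_top μ _)]
    have hterm : ∀ k ∈ Finset.Icc 1 K,
        ((k:ℝ≥0∞))⁻¹ * μ (V j k) = ENNReal.ofReal ((μ (V j k)).toReal / k) := by
      intro k hk
      rw [Finset.mem_Icc] at hk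
      have hk0 : (0:ℝ) < k := by exact_mod_cast hk.1
      have h1 : ((k:ℝ≥0∞))⁻¹ = ENNReal.ofReal ((k:ℝ)⁻¹) := by
        rw [ENNReal.ofReal_inv_of_pos hk0, ENNReal.ofReal_natCast]
      calc ((k:ℝ≥0∞))⁻¹ * μ (V j k)
          = ENNReal.ofReal ((k:ℝ)⁻¹) * ENNReal.ofReal ((μ (V j k)).toReal) := by
            rw [h1, ENNReal.ofReal_toReal (measure_ne_top μ _)]
        _ = ENNReal.ofReal ((μ (V j k)).toReal / k) := by
            rw [← ENNReal.ofReal_mul (by positivity), inv_mul_eq_div]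
    calc ∑ k ∈ Finset.Icc 1 K, ((k:ℝ≥0∞))⁻¹ * μ (V j k)
        = ∑ k ∈ Finset.Icc 1 K, ENNReal.ofReal ((μ (V j k)).toReal / k) :=
          Finset.sum_congr rfl hterm
      _ = ENNReal.ofReal (∑ k ∈ Finset.Icc 1 K, (μ (V j k)).toReal / k) :=
          (ENNReal.ofReal_sum_of_nonneg (fun k hk => by positivity)).symm
      _ ≤ ENNReal.ofReal (α / K) := by
          apply ENNReal.ofReal_le_ofReal
          have heq : ∑ k ∈ Finset.Icc 1 K, (μ (V j k)).toReal / k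
              = ∑ k ∈ Finset.Icc 1 K, (b k - b (k-1)) / k :=
            Finset.sum_congr rfl (fun k hk => by rw [hVeq k hk])
          rw [heq]
          have habel := abel_aux δ b hb0 K hbd
          have hslack : 0 ≤ (δ * K - b K) / K := by
            have := hbd K (le_refl K)
            have h2 : 0 ≤ δ * K - b K := by linarith
            positivity
          have hHα : δ * (∑ k ∈ Finset.Icc 1 K, (1:ℝ)/k) = α / K := by
            rw [← hH, hδdef]
            field_simp
          linarith [habel, hslack, hHα]
  -- inclusion of the event
  have hEsub : {ω | ∃ i ∈ Finset.Icc 1 K,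
        i ≤ (Finset.univ.filter (fun j : Fin K => Q j ω ≤ α * i / (H * K))).card}
      ⊆ ⋃ i ∈ Finset.Icc 1 K, G i := by
    intro ω hω
    obtain ⟨i0, hi0, hcard⟩ := hω
    have hωF0 : ω ∈ F i0 := by
      have hthr : α * (i0:ℝ) / (H * K) = δ * i0 := by rw [hδdef]; ring
      have hsubf : (Finset.univ.filter (fun j : Fin K => Q j ω ≤ α * i0 / (H * K)))
          ⊆ (Finset.univ.filter (fun j : Fin K => ω ∈ U j i0)) := by
        intro j hj
        rw [Finset.mem_filter] at hj ⊢
        refine ⟨hj.1, hSU j i0 ?_⟩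
        show Q j ω ≤ δ * i0
        rw [← hthr]
        exact hj.2
      exact le_trans hcard (Finset.card_le_card hsubf)
    -- pass to the maximal index
    have hTne : ((Finset.Icc 1 K).filter (fun i => ω ∈ F i)).Nonempty :=
      ⟨i0, Finset.mem_filter.2 ⟨hi0, hωF0⟩⟩
    have hiT := Finset.mem_filter.1 (Finset.max'_mem _ hTne)
    rw [Set.mem_iUnion₂]
    refine ⟨_, hiT.1, hiT.2, ?_⟩
    intro hmem
    rw [Set.mem_iUnion₂] at hmem
    obtain ⟨l, hl, hωl⟩ := hmem
    rw [Finset.mem_Ioc] at hl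
    have h1i : 1 ≤ ((Finset.Icc 1 K).filter (fun i => ω ∈ F i)).max' hTne :=
      (Finset.mem_Icc.1 hiT.1).1
    have hlT : l ∈ (Finset.Icc 1 K).filter (fun i => ω ∈ F i) :=
      Finset.mem_filter.2 ⟨Finset.mem_Icc.2 ⟨le_trans h1i hl.1.le, hl.2⟩, hωl⟩
    exact absurd (Finset.le_max' _ l hlT) (not_le.2 hl.1)
  -- assembly
  calc μ {ω | ∃ i ∈ Finset.Icc 1 K,
        i ≤ (Finset.univ.filter (fun j : Fin K => Q j ω ≤ α * i / (H * K))).card}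
      ≤ μ (⋃ i ∈ Finset.Icc 1 K, G i) := measure_mono hEsub
    _ ≤ ∑ i ∈ Finset.Icc 1 K, μ (G i) := measure_biUnion_finset_le _ _
    _ ≤ ∑ i ∈ Finset.Icc 1 K, ∑ j : Fin K,
          ∑ k ∈ Finset.Icc 1 i, ((k:ℝ≥0∞))⁻¹ * μ (V j k ∩ G i) :=
        Finset.sum_le_sum hGbound
    _ = ∑ j : Fin K, ∑ i ∈ Finset.Icc 1 K,
          ∑ k ∈ Finset.Icc 1 i, ((k:ℝ≥0∞))⁻¹ * μ (V j k ∩ G i) := Finset.sum_comm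
    _ = ∑ j : Fin K, ∑ k ∈ Finset.Icc 1 K,
          ∑ i ∈ Finset.Icc k K, ((k:ℝ≥0∞))⁻¹ * μ (V j k ∩ G i) := by
        apply Finset.sum_congr rfl
        intro j _
        apply Finset.sum_comm'
        intro i k
        simp only [Finset.mem_Icc]
        omega
    _ ≤ ∑ j : Fin K, ∑ k ∈ Finset.Icc 1 K, ((k:ℝ≥0∞))⁻¹ * μ (V j k) := by
        apply Finset.sum_le_sum
        intro j _
        apply Finset.sum_le_sum
        intro k _
        rw [← Finset.mul_sum]
        exact mul_le_mul_right (hVG j k) _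
    _ ≤ ∑ _j : Fin K, ENNReal.ofReal (α / K) := Finset.sum_le_sum (fun j _ => hVb j)
    _ = ENNReal.ofReal α := by
        rw [Finset.sum_const, Finset.card_univ, Fintype.card_fin, nsmul_eq_mul,
          ← ENNReal.ofReal_natCast, ← ENNReal.ofReal_mul (by positivity)]
        congr 1
        field_simp
end

section
/- Conditional distribution of conformal p-value CDF is Beta: Let T_1, ..., T_n be i.i.d. from a continuous distribution (the calibration scores), and let Q̂(x) = (1 + |{j : T_j ≥ x}|)/(n+1) for a fresh independent test score X with the same distribution. Then for a fixed level t with a = ⌊(n+1)t⌋ ≥ 1, the conditional probability P(Q̂(X) ≤ t | T_1,...,T_n) is distributed as Beta(a, n+1−a). -/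
/-!
Let `F` be the cdf of `ν` and `k = n + 1 - a`. The conformal p-value of `x` is at most `t` exactly
when fewer than `a` calibration scores are `≥ x`, i.e. when `x` exceeds the `k`-th smallest score
`T₍ₖ₎`; so the conditional probability is `1 - F(T₍ₖ₎)`. It is at most `q` iff at least `a` of the
scores satisfy `F(Tⱼ) ≥ 1 - q`, and since `F(Tⱼ)` is uniform for continuous `ν`, this count is
`Binomial(n, q)`. Its upper tail `P(Bin(n, q) ≥ a)` is the cdf of `Beta(a, n + 1 - a)`: its
derivative in `q` telescopes, as a sum of Bernstein polynomials, to the Beta density.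
-/

open MeasureTheory

/-- The Beta(a,b) distribution on ℝ, as a measure with the usual density on (0,1). -/
noncomputable def betaMeasure (a b : ℝ) : Measure ℝ :=
  (volume.restrict (Set.Ioo (0:ℝ) 1)).withDensity
    (fun x => ENNReal.ofReal
      (x ^ (a - 1) * (1 - x) ^ (b - 1) * (Real.Gamma (a + b) / (Real.Gamma a * Real.Gamma b))))

open Finset Polynomial

namespace ProbabilityTheory

theorem measurableSet_setOf_le_cdf (ν : Measure ℝ) (u : ℝ) : MeasurableSet {y | u ≤ cdf ν y} :=
  measurableSet_le measurable_const (monotone_cdf ν).measurable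

variable {ν : Measure ℝ} [IsProbabilityMeasure ν]

theorem continuous_cdf [NullSingletonClass ν] : Continuous (cdf ν) := by
  refine continuous_iff_continuousAt.2 fun x => ?_
  rw [(monotone_cdf ν).continuousAt_iff_leftLim_eq_rightLim, (cdf ν).rightLim_eq]
  have h := (cdf ν).measure_singleton x
  rw [measure_cdf, measure_singleton, eq_comm, ENNReal.ofReal_eq_zero, sub_nonpos] at h
  exact le_antisymm ((monotone_cdf ν).leftLim_le le_rfl) h

theorem measureReal_Ioi_eq_one_sub_cdf (x : ℝ) : ν.real (Set.Ioi x) = 1 - cdf ν x := by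
  rw [← Set.compl_Iic, probReal_compl_eq_one_sub measurableSet_Iic, cdf_eq_real]

theorem measure_setOf_le_cdf [NullSingletonClass ν] {u : ℝ} (hu : 0 ≤ u) :
    ν {y | u ≤ cdf ν y} = ENNReal.ofReal (1 - u) := by
  set B := {y | u ≤ cdf ν y}
  rcases hu.eq_or_lt with rfl | hu
  · simp [B, cdf_nonneg]
  rcases B.eq_empty_or_nonempty with hB | hB
  · have hu1 : 1 ≤ u := by
      by_contra! hu1
      obtain ⟨y, hy⟩ := ((tendsto_cdf_atTop ν).eventually (lt_mem_nhds hu1)).exists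
      exact hB.subset (show y ∈ B from hy.le)
    rw [hB, measure_empty, ENNReal.ofReal_eq_zero.2 (by linarith)]
  have hbdd : BddBelow B := by
    obtain ⟨y₀, hy₀⟩ :=
      ((tendsto_cdf_atBot ν).eventually (gt_mem_nhds hu)).exists_forall_of_atBot
    exact ⟨y₀, fun y hy => le_of_not_gt fun h => (hy₀ y h.le).not_ge hy⟩
  set c := sInf B
  have hc : c ∈ B := (isClosed_le continuous_const continuous_cdf).csInf_mem hB hbdd
  have hB_eq : B = Set.Ici c :=
    subset_antisymm (fun y hy => csInf_le hbdd hy) fun y hy => hc.trans (monotone_cdf ν hy)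
  have hFc : cdf ν c = u := by
    refine le_antisymm (le_of_tendsto
      (continuous_cdf.tendsto c |>.mono_left (nhdsWithin_le_nhds (s := Set.Iio c)))
      (eventually_nhdsWithin_of_forall fun y hy => ?_)) hc
    exact (not_le.1 fun h => (Set.mem_Iio.1 hy).not_ge (csInf_le hbdd h)).le
  rw [hB_eq, ← measure_congr Ioi_ae_eq_Ici, ← ofReal_measureReal,
    measureReal_Ioi_eq_one_sub_cdf, hFc]

section CountingScores

variable {ι : Type*} [Fintype ι] (T : ι → ℝ) {a : ℕ} {q : ℝ}

theorem measureReal_setOf_card_lt_le_of_le_card (ha : 1 ≤ a)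
    (h : a ≤ #{j | 1 - q ≤ cdf ν (T j)}) :
    ν.real {x | #{j | x ≤ T j} < a} ≤ q := by
  set J : Finset ι := {j | 1 - q ≤ cdf ν (T j)}
  have hJ : J.Nonempty := Finset.card_pos.1 (by omega)
  obtain ⟨j₀, hj₀, hmin⟩ := J.exists_mem_eq_inf' hJ T
  have hsub : {x | #{j | x ≤ T j} < a} ⊆ Set.Ioi (T j₀) := fun x hx => lt_of_not_ge fun hx₀ => by
    refine (h.trans (Finset.card_le_card fun j hj => ?_)).not_gt hx
    simpa using hx₀.trans (hmin ▸ J.inf'_le T hj)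
  calc ν.real {x | #{j | x ≤ T j} < a} ≤ ν.real (Set.Ioi (T j₀)) := measureReal_mono hsub
    _ ≤ q := by rw [measureReal_Ioi_eq_one_sub_cdf]; linarith [(Finset.mem_filter.1 hj₀).2]

theorem lt_measureReal_setOf_card_lt_of_card_lt (ha : a ≤ Fintype.card ι)
    (h : #{j | 1 - q ≤ cdf ν (T j)} < a) :
    q < ν.real {x | #{j | x ≤ T j} < a} := by
  set K : Finset ι := {j | cdf ν (T j) < 1 - q}
  have hK : K.Nonempty := by
    have := Finset.card_filter_add_card_filter_not (s := univ) fun j => 1 - q ≤ cdf ν (T j)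
    simp only [not_le, card_univ] at this
    exact Finset.card_pos.1 (by simp only [K]; omega)
  obtain ⟨j₁, hj₁, hmax⟩ := K.exists_mem_eq_sup' hK T
  have hsub : Set.Ioi (T j₁) ⊆ {x | #{j | x ≤ T j} < a} := fun x hx => by
    refine lt_of_le_of_lt (Finset.card_le_card fun j hj => ?_) h
    simp only [Finset.mem_filter, Finset.mem_univ, true_and] at hj ⊢
    by_contra! hj'
    exact (Set.mem_Ioi.1 hx).not_ge (hj.trans (hmax ▸ K.le_sup' T (by simpa [K] using hj')))
  calc q < ν.real (Set.Ioi (T j₁)) := by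
        rw [measureReal_Ioi_eq_one_sub_cdf]; linarith [(Finset.mem_filter.1 hj₁).2]
    _ ≤ _ := measureReal_mono hsub

theorem measureReal_setOf_card_lt_le_iff (ha : 1 ≤ a) (ha' : a ≤ Fintype.card ι) :
    ν.real {x | #{j | x ≤ T j} < a} ≤ q ↔ a ≤ #{j | 1 - q ≤ cdf ν (T j)} :=
  ⟨fun h => le_of_not_gt fun h' => (lt_measureReal_setOf_card_lt_of_card_lt T ha' h').not_ge h,
    measureReal_setOf_card_lt_le_of_le_card T ha⟩

end CountingScores

end ProbabilityTheory

namespace MeasureTheory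

section Binomial

variable {ι α : Type*} [Fintype ι] {B : Set α} [DecidablePred (· ∈ B)]

theorem preimage_filter_mem_singleton_eq_pi [DecidableEq ι] (s : Finset ι) :
    (fun T : ι → α => ({j | T j ∈ B} : Finset ι)) ⁻¹' {s} =
      Set.pi Set.univ fun j => if j ∈ s then B else Bᶜ := by
  ext T
  simp only [Set.mem_preimage, Set.mem_singleton_iff, Set.mem_pi, Set.mem_univ, true_implies,
    Finset.ext_iff, Finset.mem_filter, Finset.mem_univ, true_and]
  refine forall_congr' fun j => ?_
  split_ifs with hj <;> simp [hj]

theorem setOf_card_filter_mem_eq_biUnion (P : ℕ → Prop) [DecidablePred P] :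
    {T : ι → α | P #{j | T j ∈ B}} =
      ⋃ s ∈ (univ.filter fun s : Finset ι => P #s),
        (fun T : ι → α => ({j | T j ∈ B} : Finset ι)) ⁻¹' {s} := by
  ext T
  simp

variable [MeasurableSpace α]

theorem measurableSet_preimage_filter_mem_singleton (hB : MeasurableSet B) (s : Finset ι) :
    MeasurableSet ((fun T : ι → α => ({j | T j ∈ B} : Finset ι)) ⁻¹' {s}) := by
  classical
  rw [preimage_filter_mem_singleton_eq_pi]
  exact .univ_pi fun j => by split_ifs <;> [exact hB; exact hB.compl]

theorem measurableSet_setOf_card_filter_mem (hB : MeasurableSet B) (P : ℕ → Prop)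
    [DecidablePred P] : MeasurableSet {T : ι → α | P #{j | T j ∈ B}} := by
  rw [setOf_card_filter_mem_eq_biUnion]
  exact Finset.measurableSet_biUnion _ fun s _ => measurableSet_preimage_filter_mem_singleton hB s

theorem measure_pi_setOf_card_filter_mem (μ : Measure α) [SigmaFinite μ] (hB : MeasurableSet B)
    (P : ℕ → Prop) [DecidablePred P] :
    Measure.pi (fun _ : ι => μ) {T | P #{j | T j ∈ B}} =
      ∑ i ∈ range (Fintype.card ι + 1) with P i,
        (Fintype.card ι).choose i * μ B ^ i * μ Bᶜ ^ (Fintype.card ι - i) := by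
  classical
  have hfiber (s : Finset ι) : Measure.pi (fun _ : ι => μ)
      ((fun T : ι → α => ({j | T j ∈ B} : Finset ι)) ⁻¹' {s}) =
      μ B ^ #s * μ Bᶜ ^ (Fintype.card ι - #s) := by
    rw [preimage_filter_mem_singleton_eq_pi, Measure.pi_pi]
    simp [apply_ite μ, Finset.prod_ite, Finset.filter_not, Finset.card_sdiff]
  rw [setOf_card_filter_mem_eq_biUnion, measure_biUnion_finset
    ((Set.pairwiseDisjoint_fiber _ _).subset (Set.subset_univ _))
    fun s _ => measurableSet_preimage_filter_mem_singleton hB s]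
  simp_rw [hfiber, Finset.sum_filter]
  rw [← Finset.powerset_univ, Finset.sum_powerset_apply_card
    (fun m => if P m then μ B ^ m * μ Bᶜ ^ (Fintype.card ι - m) else 0), Finset.card_univ]
  refine Finset.sum_congr rfl fun i _ => ?_
  split_ifs <;> simp [mul_assoc]

end Binomial

end MeasureTheory

namespace bernsteinPolynomial

variable {R : Type*} [CommRing R]

theorem derivative_sum_Icc {n a : ℕ} (ha : 1 ≤ a) (han : a ≤ n) :
    derivative (∑ j ∈ Icc a n, bernsteinPolynomial R n j) =
      n * bernsteinPolynomial R (n - 1) (a - 1) := by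
  set g : ℕ → R[X] := fun i => n * bernsteinPolynomial R (n - 1) (i - 1)
  have hterm : ∀ j ∈ Icc a n, derivative (bernsteinPolynomial R n j) = -(g (j + 1) - g j) :=
    fun j hj => by
      obtain ⟨i, rfl⟩ : ∃ i, j = i + 1 := ⟨j - 1, by grind⟩
      simp [g, derivative_succ, mul_sub]
  rw [derivative_sum, sum_congr rfl hterm, sum_neg_distrib, sum_Icc_sub han g]
  simp [g, eq_zero_of_lt R (Nat.sub_lt (by omega : 0 < n) one_pos)]

theorem eval_nonneg {n j : ℕ} {x : ℝ} (hx : x ∈ Set.Icc 0 1) :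
    0 ≤ (bernsteinPolynomial ℝ n j).eval x :=
  bernstein_nonneg (x := ⟨x, hx⟩)

theorem ofReal_eval_sum_Icc {n a : ℕ} {p : ℝ} (hp : p ∈ Set.Icc 0 1) :
    ENNReal.ofReal ((∑ j ∈ Icc a n, bernsteinPolynomial ℝ n j).eval p) =
      ∑ i ∈ range (n + 1) with a ≤ i,
        n.choose i * ENNReal.ofReal p ^ i * ENNReal.ofReal (1 - p) ^ (n - i) := by
  have hIcc : (range (n + 1)).filter (a ≤ ·) = Icc a n := by
    ext i; simp only [mem_filter, mem_range, mem_Icc]; omega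
  rw [eval_finsetSum, ENNReal.ofReal_sum_of_nonneg fun j _ => eval_nonneg hp, hIcc]
  refine sum_congr rfl fun i _ => ?_
  obtain ⟨hp0, hp1⟩ := hp
  simp only [bernsteinPolynomial, eval_mul, eval_pow, eval_natCast, eval_X, eval_sub, eval_one]
  rw [ENNReal.ofReal_mul (by positivity), ENNReal.ofReal_mul (by positivity),
    ENNReal.ofReal_pow hp0, ENNReal.ofReal_pow (sub_nonneg.2 hp1), ENNReal.ofReal_natCast]

end bernsteinPolynomial

theorem betaDensity_eq_mul_eval_bernsteinPolynomial {a n : ℕ} (ha : 1 ≤ a) (han : a ≤ n) (x : ℝ) :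
    x ^ ((a : ℝ) - 1) * (1 - x) ^ ((n + 1 - a : ℝ) - 1) *
      (Real.Gamma (a + (n + 1 - a)) / (Real.Gamma a * Real.Gamma (n + 1 - a))) =
      n * (bernsteinPolynomial ℝ (n - 1) (a - 1)).eval x := by
  obtain ⟨b, rfl⟩ : ∃ b, a = b + 1 := ⟨a - 1, by omega⟩
  obtain ⟨c, rfl⟩ : ∃ c, n = b + c + 1 := ⟨n - b - 1, by omega⟩
  have hfact := Nat.add_choose_mul_factorial_mul_factorial b c
  simp only [bernsteinPolynomial, Nat.add_sub_cancel, eval_mul, eval_pow, eval_natCast, eval_X,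
    eval_sub, eval_one]
  push_cast
  rw [show (b : ℝ) + 1 - 1 = b by ring, show (b + c + 1 + 1 - (b + 1) : ℝ) - 1 = c by ring,
    show (b + 1 + (b + c + 1 + 1 - (b + 1)) : ℝ) = (b + c + 1 : ℕ) + 1 by push_cast; ring,
    show (b + c + 1 + 1 - (b + 1) : ℝ) = c + 1 by ring, Real.rpow_natCast, Real.rpow_natCast,
    Real.Gamma_nat_eq_factorial, Real.Gamma_nat_eq_factorial, Real.Gamma_nat_eq_factorial,
    Nat.factorial_succ, show b + c - b = c by omega, Nat.choose_symm_add, ← hfact]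
  push_cast
  field_simp

theorem betaMeasure_Iic {a n : ℕ} (ha : 1 ≤ a) (han : a ≤ n) {q : ℝ} (hq : 0 ≤ q) :
    betaMeasure a (n + 1 - a) (Set.Iic q) =
      ENNReal.ofReal ((∑ j ∈ Icc a n, bernsteinPolynomial ℝ n j).eval (min q 1)) := by
  set p := min q 1
  have hp : 0 ≤ p := le_min hq zero_le_one
  have hset : (Set.Iic q ∩ Set.Ioo 0 1 : Set ℝ) =ᵐ[volume] (Set.Ioc 0 p : Set ℝ) := by
    rw [Set.inter_comm, show p = 1 ⊓ q from min_comm q 1, ← Set.Ioc_inter_Iic]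
    exact Ioo_ae_eq_Ioc.inter Filter.EventuallyEq.rfl
  have hderiv (x : ℝ) := (∑ j ∈ Icc a n, bernsteinPolynomial ℝ n j).hasDerivAt x
  simp only [bernsteinPolynomial.derivative_sum_Icc ha han, eval_mul, eval_natCast] at hderiv
  rw [betaMeasure, withDensity_apply _ measurableSet_Iic,
    Measure.restrict_restrict measurableSet_Iic, setLIntegral_congr hset]
  simp_rw [betaDensity_eq_mul_eval_bernsteinPolynomial ha han]
  rw [← ofReal_integral_eq_lintegral_ofReal, ← intervalIntegral.integral_of_le hp]
  · rw [intervalIntegral.integral_eq_sub_of_hasDerivAt (fun x _ => hderiv x)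
      ((by fun_prop : Continuous _).intervalIntegrable _ _)]
    simp [eval_finsetSum, bernsteinPolynomial.eval_at_0, Nat.one_le_iff_ne_zero.1 ha]
  · exact (by fun_prop : Continuous _).integrableOn_Ioc
  · refine ae_restrict_of_forall_mem measurableSet_Ioc fun x hx => ?_
    exact mul_nonneg (Nat.cast_nonneg n) (bernsteinPolynomial.eval_nonneg
      ⟨hx.1.le, hx.2.trans (min_le_right q 1)⟩)

theorem betaMeasure_Iic_of_neg (α β : ℝ) {q : ℝ} (hq : q < 0) :
    betaMeasure α β (Set.Iic q) = 0 := by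
  have hempty : Set.Iic q ∩ Set.Ioo 0 1 = ∅ :=
    Set.eq_empty_of_forall_notMem fun x hx => by linarith [hx.1.out, hx.2.1]
  rw [betaMeasure, withDensity_apply _ measurableSet_Iic,
    Measure.restrict_restrict measurableSet_Iic, hempty, Measure.restrict_empty,
    lintegral_zero_measure]

theorem one_add_div_le_iff_lt {n a c : ℕ} {t : ℝ} (ha : (a : ℝ) = ⌊(n + 1 : ℝ) * t⌋) :
    (1 + c : ℝ) / (n + 1) ≤ t ↔ c < a := by
  have ha' : (a : ℤ) = ⌊(n + 1 : ℝ) * t⌋ := by exact_mod_cast ha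
  rw [div_le_iff₀ (by positivity), mul_comm, ← Nat.add_one_le_iff, ← Int.ofNat_le, ha',
    Int.le_floor]
  push_cast
  rw [add_comm]

namespace ProbabilityTheory

variable {ι : Type*} [Fintype ι] {ν : Measure ℝ} [IsProbabilityMeasure ν] {a : ℕ}

theorem measurable_measureReal_setOf_card_lt (ha : 1 ≤ a) (ha' : a ≤ Fintype.card ι) :
    Measurable fun T : ι → ℝ => ν.real {x | #{j | x ≤ T j} < a} := by
  refine measurable_of_Iic fun q => ?_
  convert measurableSet_setOf_card_filter_mem (ι := ι) (measurableSet_setOf_le_cdf ν (1 - q))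
    (a ≤ ·) using 1
  ext T
  exact measureReal_setOf_card_lt_le_iff T ha ha'

theorem measure_pi_setOf_measureReal_setOf_card_lt_le [NullSingletonClass ν] (ha : 1 ≤ a)
    (ha' : a ≤ Fintype.card ι) {p : ℝ} (hp : p ∈ Set.Icc 0 1) :
    Measure.pi (fun _ : ι => ν) {T | ν.real {x | #{j | x ≤ T j} < a} ≤ p} =
      ∑ i ∈ range (Fintype.card ι + 1) with a ≤ i, (Fintype.card ι).choose i *
        ENNReal.ofReal p ^ i * ENNReal.ofReal (1 - p) ^ (Fintype.card ι - i) := by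
  have hB := measure_setOf_le_cdf (ν := ν) (sub_nonneg.2 hp.2)
  rw [sub_sub_cancel] at hB
  have hBc : ν {y | 1 - p ≤ cdf ν y}ᶜ = ENNReal.ofReal (1 - p) := by
    rw [prob_compl_eq_one_sub (measurableSet_setOf_le_cdf ν _), hB, ← ENNReal.ofReal_one,
      ← ENNReal.ofReal_sub _ hp.1]
  have := measure_pi_setOf_card_filter_mem (ι := ι) ν (measurableSet_setOf_le_cdf ν (1 - p))
    (a ≤ ·)
  rw [hB, hBc] at this
  simp_rw [measureReal_setOf_card_lt_le_iff _ ha ha']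
  exact this

end ProbabilityTheory

theorem stmt16_general (n : ℕ) (ν : Measure ℝ) [IsProbabilityMeasure ν]
    (hcont : ∀ x : ℝ, ν {x} = 0)
    (t : ℝ)
    (a : ℕ) (ha : (a : ℝ) = ⌊(n + 1 : ℝ) * t⌋) (ha1 : 1 ≤ a) (han : a ≤ n) :
    (Measure.pi (fun _ : Fin n => ν)).map
        (fun T : Fin n → ℝ =>
          (ν {x | ((1 + (Finset.univ.filter (fun j : Fin n => x ≤ T j)).card : ℝ)
              / (n + 1)) ≤ t}).toReal)
      = betaMeasure a (n + 1 - a) := by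
  have : NullSingletonClass ν := ⟨hcont⟩
  have hcard : a ≤ Fintype.card (Fin n) := by simpa using han
  set g : (Fin n → ℝ) → ℝ := fun T => ν.real {x | #{j | x ≤ T j} < a}
  have hg : (fun T : Fin n → ℝ => (ν {x | ((1 + #{j | x ≤ T j} : ℝ) / (n + 1)) ≤ t}).toReal) =
      g := by
    simp_rw [one_add_div_le_iff_lt ha]
    rfl
  have hmeas : Measurable g := ProbabilityTheory.measurable_measureReal_setOf_card_lt ha1 hcard
  rw [hg]
  refine Measure.ext_of_Iic _ _ fun q => ?_
  rw [Measure.map_apply hmeas measurableSet_Iic]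
  rcases lt_or_ge q 0 with hq | hq
  · have hempty : g ⁻¹' Set.Iic q = ∅ :=
      Set.eq_empty_of_forall_notMem fun T hT => hq.not_ge (measureReal_nonneg.trans hT)
    rw [betaMeasure_Iic_of_neg _ _ hq, hempty, measure_empty]
  -- `g ≤ 1`, so only `min q 1 ∈ [0, 1]` matters on both sides
  have hp : min q 1 ∈ Set.Icc 0 1 := ⟨le_min hq zero_le_one, min_le_right q 1⟩
  have hclamp : g ⁻¹' Set.Iic q = {T | g T ≤ min q 1} := by
    ext T
    simp [g, measureReal_le_one]
  rw [hclamp, ProbabilityTheory.measure_pi_setOf_measureReal_setOf_card_lt_le ha1 hcard hp,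
    betaMeasure_Iic ha1 han hq, bernsteinPolynomial.ofReal_eval_sum_Icc hp, Fintype.card_fin]

/-- The conditional probability, given i.i.d. continuous calibration scores T₁,...,Tₙ,
that the conformal p-value of a fresh i.i.d. test score is at most t, is distributed
as Beta(a, n+1−a) where a = ⌊(n+1)t⌋. -/
theorem stmt16 (n : ℕ) (ν : Measure ℝ) [IsProbabilityMeasure ν]
    (hcont : ∀ x : ℝ, ν {x} = 0)
    (t : ℝ) (ht : t ∈ Set.Icc (0:ℝ) 1)
    (a : ℕ) (ha : (a : ℝ) = ⌊(n + 1 : ℝ) * t⌋) (ha1 : 1 ≤ a) (han : a ≤ n) :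
    (Measure.pi (fun _ : Fin n => ν)).map
        (fun T : Fin n → ℝ =>
          (ν {x | ((1 + (Finset.univ.filter (fun j : Fin n => x ≤ T j)).card : ℝ)
              / (n + 1)) ≤ t}).toReal)
      = betaMeasure a (n + 1 - a) :=
  stmt16_general n ν hcont t a ha ha1 han
end

section
/- Conditional false alarm control of the BH-based conformal OOD test: Fix α, δ, ε > 0 and let Q̂^1, ..., Q̂^K be conformal p-values computed from calibration set T_cal, each marginally valid given the calibration set in the sense that r^i_j := P(Q̂^i ≤ αj/(C(K)K) | T_cal) ~ Beta(a_j, b_j) with a_j = ⌊(n_cal+1)·αj/(C(K)K)⌋, b_j = n_cal+1−a_j, where C(K) = (1+ε)·H_K. If n_cal is large enough that with probability ≥ 1−δ all r^i_j ≤ (1+ε)·αj/(C(K)K), then with probability at least 1−δ over the calibration set, the probability (conditioned on T_cal) that the BH procedure with thresholds αi/(C(K)K) rejects at least one hypothesis, when all K null hypotheses are true, is at most α. -/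
open MeasureTheory

lemma abel_aux_s17 (c : ℝ) (m : ℕ → ℝ) (K : ℕ) (hK : 1 ≤ K)
    (hm0 : m 0 = 0)
    (hbound : ∀ k, 1 ≤ k → k ≤ K → m k ≤ c * k) :
    ∑ k ∈ Finset.Icc 1 K, (1 / (k:ℝ)) * (m k - m (k - 1)) + c
      ≤ c * ∑ k ∈ Finset.Icc 1 K, (1 / (k:ℝ)) + m K / K := by
  induction K, hK using Nat.le_induction with
  | base => simp [hm0]; linarith
  | succ K hK ih =>
    rw [Finset.sum_Icc_succ_top (by omega), Finset.sum_Icc_succ_top (by omega)]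
    have ih' := ih (fun k h1 h2 => hbound k h1 (by omega))
    have hmK : m K ≤ c * K := hbound K hK (by omega)
    have hK0 : (0:ℝ) < (K:ℝ) := by exact_mod_cast hK
    have hK1 : (0:ℝ) < (K:ℝ) + 1 := by linarith
    have key : m K / K + (m (K+1) - m K) / ((K:ℝ)+1) ≤ c / ((K:ℝ)+1) + m (K+1) / ((K:ℝ)+1) := by
      rw [div_add_div _ _ hK0.ne' hK1.ne', div_add_div _ _ hK1.ne' hK1.ne',
        div_le_div_iff₀ (by positivity) (by positivity)]
      nlinarith
    simp only [Nat.add_sub_cancel]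
    push_cast
    have e1 : (1:ℝ)/((K:ℝ)+1) * (m (K+1) - m K) = (m (K+1) - m K)/((K:ℝ)+1) := by ring
    have e2 : c * (∑ k ∈ Finset.Icc 1 K, (1 / (k:ℝ)) + 1/((K:ℝ)+1))
        = c * ∑ k ∈ Finset.Icc 1 K, (1 / (k:ℝ)) + c/((K:ℝ)+1) := by ring
    rw [e1, e2]
    linarith [ih', key]

lemma abel_sum (c : ℝ) (m : ℕ → ℝ) (K : ℕ) (hK : 1 ≤ K)
    (hm0 : m 0 = 0)
    (hbound : ∀ k, 1 ≤ k → k ≤ K → m k ≤ c * k) :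
    ∑ k ∈ Finset.Icc 1 K, (1 / (k:ℝ)) * (m k - m (k - 1))
      ≤ c * ∑ k ∈ Finset.Icc 1 K, (1 / (k:ℝ)) := by
  have h := abel_aux_s17 c m K hK hm0 hbound
  have hK0 : (0:ℝ) < (K:ℝ) := by exact_mod_cast hK
  have : m K / K ≤ c := by
    rw [div_le_iff₀ hK0]
    simpa [mul_comm] using hbound K hK le_rfl
  linarith

/-- Conditional false alarm control of the BH-based conformal OOD test: with
probability at least 1−δ over the calibration set, the conditional probability that
the BH procedure with thresholds α·i/(C(K)·K) rejects at least one of the K true null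
hypotheses is at most α. Here the calibration randomness is (Ωc, μc), and for each
calibration outcome ω the conditional (test-time) distribution is κ ω; the BH test
rejects at least one hypothesis iff for some 1 ≤ i ≤ K at least i of the conformal
p-values are ≤ α·i/(C(K)·K). -/
theorem stmt17 {Ωc Ωt : Type*} [MeasurableSpace Ωc] [MeasurableSpace Ωt]
    (μc : Measure Ωc) [IsProbabilityMeasure μc]
    (κ : Ωc → Measure Ωt) (hκ : ∀ ω, IsProbabilityMeasure (κ ω))
    (K n_cal : ℕ) (hK : 0 < K)
    (α δ ε : ℝ) (hα : 0 < α) (hδ : 0 < δ) (hε : 0 < ε)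
    (C : ℝ) (hC : C = (1 + ε) * ∑ j ∈ Finset.Icc 1 K, (1:ℝ)/j)
    (Qhat : Fin K → Ωc → Ωt → ℝ)
    (a b : ℕ → ℕ)
    (hab : ∀ j ∈ Finset.Icc 1 K,
      (a j : ℝ) = ⌊(n_cal + 1 : ℝ) * (α * j / (C * K))⌋ ∧ b j = n_cal + 1 - a j)
    (r : Fin K → ℕ → Ωc → ℝ)
    (hr : ∀ i j ω, r i j ω = ((κ ω) {x | Qhat i ω x ≤ α * j / (C * K)}).toReal)
    (hbeta : ∀ i : Fin K, ∀ j ∈ Finset.Icc 1 K,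
      μc.map (r i j) = betaMeasure (a j) (b j))
    (hn : ENNReal.ofReal (1 - δ) ≤ μc {ω | ∀ i : Fin K, ∀ j ∈ Finset.Icc 1 K,
      r i j ω ≤ (1 + ε) * (α * j / (C * K))}) :
    ENNReal.ofReal (1 - δ) ≤ μc {ω |
      (κ ω) {x | ∃ i ∈ Finset.Icc 1 K,
        i ≤ (Finset.univ.filter (fun j : Fin K => Qhat j ω x ≤ α * i / (C * K))).card}
      ≤ ENNReal.ofReal α} := by
  classical
  clear hbeta hab
  refine hn.trans (measure_mono ?_)
  intro ω hω
  simp only [Set.mem_setOf_eq] at hω ⊢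
  set μ := κ ω with hμ
  haveI := hκ ω
  -- positivity facts
  have hHpos : 0 < ∑ j ∈ Finset.Icc 1 K, (1:ℝ)/j := by
    apply Finset.sum_pos
    · intro j hj
      have h1 : 1 ≤ j := (Finset.mem_Icc.mp hj).1
      have : (0:ℝ) < j := by exact_mod_cast h1
      positivity
    · exact ⟨1, Finset.mem_Icc.mpr ⟨le_refl 1, hK⟩⟩
  have hCpos : 0 < C := by rw [hC]; positivity
  have hKpos : (0:ℝ) < K := by exact_mod_cast hK
  -- the nested sets
  set A : Fin K → ℕ → Set Ωt := fun j k => {x | Qhat j ω x ≤ α * k / (C * K)} with hAdef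
  set M : Fin K → ℕ → Set Ωt :=
    fun j k => if k = 0 then ∅ else ⋂ l ∈ Finset.Icc k K, toMeasurable μ (A j l) with hMdef
  have hAmono : ∀ (j : Fin K) (k l : ℕ), k ≤ l → A j k ⊆ A j l := by
    intro j k l hkl x hx
    have hkl' : (k:ℝ) ≤ (l:ℝ) := by exact_mod_cast hkl
    have hCK : (0:ℝ) < C * K := by positivity
    have hx' : Qhat j ω x ≤ α * k / (C * K) := hx
    show Qhat j ω x ≤ α * l / (C * K)
    refine hx'.trans ?_
    gcongr
  have hMval : ∀ (j : Fin K) (k : ℕ), M j k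
      = if k = 0 then ∅ else ⋂ l ∈ Finset.Icc k K, toMeasurable μ (A j l) := fun _ _ => rfl
  have hMmeas : ∀ (j : Fin K) (k : ℕ), MeasurableSet (M j k) := by
    intro j k
    rw [hMval]
    by_cases h : k = 0
    · simp [h]
    · simp only [if_neg h]
      exact Finset.measurableSet_biInter _ (fun l _ => measurableSet_toMeasurable μ _)
  have hAM : ∀ (j : Fin K) (k : ℕ), 1 ≤ k → A j k ⊆ M j k := by
    intro j k hk x hx
    rw [hMval]
    simp only [if_neg (by omega : ¬ k = 0)]
    refine Set.mem_iInter₂.mpr fun l hl => ?_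
    exact subset_toMeasurable μ _ (hAmono j k l (Finset.mem_Icc.mp hl).1 hx)
  have hMmono : ∀ (j : Fin K) (k l : ℕ), k ≤ l → M j k ⊆ M j l := by
    intro j k l hkl x hx
    rw [hMval] at hx
    rw [hMval]
    by_cases hk0 : k = 0
    · rw [if_pos hk0] at hx; simp at hx
    · have hl0 : ¬ l = 0 := by omega
      rw [if_neg hk0] at hx
      rw [if_neg hl0]
      refine Set.mem_iInter₂.mpr fun i hi => ?_
      refine Set.mem_iInter₂.mp hx i ?_
      rw [Finset.mem_Icc] at hi ⊢
      omega
  have hMle : ∀ (j : Fin K) (k : ℕ), 1 ≤ k → k ≤ K →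
      μ (M j k) ≤ ENNReal.ofReal ((1 + ε) * (α * k / (C * K))) := by
    intro j k h1 h2
    have hsub : M j k ⊆ toMeasurable μ (A j k) := by
      rw [hMval]
      simp only [if_neg (by omega : ¬ k = 0)]
      exact Set.iInter₂_subset k (Finset.mem_Icc.mpr ⟨le_refl k, h2⟩)
    calc μ (M j k) ≤ μ (toMeasurable μ (A j k)) := measure_mono hsub
      _ = μ (A j k) := measure_toMeasurable _
      _ = ENNReal.ofReal (r j k ω) := by
          rw [hr j k ω, ENNReal.ofReal_toReal (measure_ne_top μ _)]
      _ ≤ ENNReal.ofReal ((1 + ε) * (α * k / (C * K))) := by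
          exact ENNReal.ofReal_le_ofReal (hω j k (Finset.mem_Icc.mpr ⟨h1, h2⟩))
  -- the disjointified bins and the weight function
  set D : Fin K → ℕ → Set Ωt := fun j k => M j k \ M j (k - 1) with hDdef
  set f : Ωt → ENNReal := fun x => ∑ j : Fin K, ∑ k ∈ Finset.Icc 1 K,
      (D j k).indicator (fun _ => ((k:ENNReal))⁻¹) x with hfdef
  have hfmeas : Measurable f := by
    apply Finset.measurable_sum
    intro j _
    apply Finset.measurable_sum
    intro k _
    exact Measurable.indicator measurable_const ((hMmeas j k).diff (hMmeas j (k-1)))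
  -- pointwise bound: rejection implies f ≥ 1
  have hsub : {x | ∃ i ∈ Finset.Icc 1 K,
        i ≤ (Finset.univ.filter (fun j : Fin K => Qhat j ω x ≤ α * i / (C * K))).card}
      ⊆ {x | 1 ≤ f x} := by
    intro x hx
    obtain ⟨i, hi, hcard⟩ := hx
    rw [Finset.mem_Icc] at hi
    set S := Finset.univ.filter (fun j : Fin K => Qhat j ω x ≤ α * i / (C * K)) with hS
    have hjS : ∀ j ∈ S, x ∈ M j i := by
      intro j hj
      exact hAM j i hi.1 ((Finset.mem_filter.mp hj).2)
    have hterm : ∀ j ∈ S, ((i:ENNReal))⁻¹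
        ≤ ∑ k ∈ Finset.Icc 1 K, (D j k).indicator (fun _ => ((k:ENNReal))⁻¹) x := by
      intro j hj
      have hiT : i ∈ (Finset.Icc 1 K).filter (fun l => x ∈ M j l) :=
        Finset.mem_filter.mpr ⟨Finset.mem_Icc.mpr hi, hjS j hj⟩
      have hne : ((Finset.Icc 1 K).filter (fun l => x ∈ M j l)).Nonempty := ⟨i, hiT⟩
      set k0 := ((Finset.Icc 1 K).filter (fun l => x ∈ M j l)).min' hne with hk0def
      have hk0T := Finset.min'_mem _ hne
      have hk0Icc : k0 ∈ Finset.Icc 1 K := (Finset.mem_filter.mp hk0T).1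
      have hxk0 : x ∈ M j k0 := (Finset.mem_filter.mp hk0T).2
      have hk0i : k0 ≤ i := Finset.min'_le _ i hiT
      have hk01 : 1 ≤ k0 := (Finset.mem_Icc.mp hk0Icc).1
      have hxD : x ∈ D j k0 := by
        refine ⟨hxk0, fun hcon => ?_⟩
        by_cases h : k0 = 1
        · rw [h] at hcon
          rw [hMval] at hcon
          simp at hcon
        · have hmem : k0 - 1 ∈ (Finset.Icc 1 K).filter (fun l => x ∈ M j l) := by
            refine Finset.mem_filter.mpr ⟨Finset.mem_Icc.mpr ⟨by omega, ?_⟩, hcon⟩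
            have := (Finset.mem_Icc.mp hk0Icc).2; omega
          have := Finset.min'_le _ _ hmem
          omega
      calc ((i:ENNReal))⁻¹ ≤ ((k0:ENNReal))⁻¹ := by
            apply ENNReal.inv_le_inv.mpr
            exact_mod_cast hk0i
        _ = (D j k0).indicator (fun _ => ((k0:ENNReal))⁻¹) x := by
            rw [Set.indicator_of_mem hxD]
        _ ≤ _ := Finset.single_le_sum (f := fun k => (D j k).indicator (fun _ => ((k:ENNReal))⁻¹) x)
            (fun k _ => zero_le) hk0Icc
    have h1 : ∑ j ∈ S, ((i:ENNReal))⁻¹ ≤ f x := by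
      refine le_trans (Finset.sum_le_sum hterm) ?_
      exact Finset.sum_le_sum_of_subset (Finset.subset_univ S)
    rw [Finset.sum_const, nsmul_eq_mul] at h1
    have hi0 : (i:ENNReal) ≠ 0 := by
      have : i ≠ 0 := by omega
      exact_mod_cast this
    refine le_trans ?_ h1
    calc (1:ENNReal) = (i:ENNReal) * ((i:ENNReal))⁻¹ :=
          (ENNReal.mul_inv_cancel hi0 (ENNReal.natCast_ne_top i)).symm
      _ ≤ (S.card : ENNReal) * ((i:ENNReal))⁻¹ := by
          have hc' : (i:ENNReal) ≤ (S.card:ENNReal) := by exact_mod_cast hcard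
          exact mul_le_mul_left hc' _
  -- Markov + integral computation
  have hmarkov : μ {x | ∃ i ∈ Finset.Icc 1 K,
        i ≤ (Finset.univ.filter (fun j : Fin K => Qhat j ω x ≤ α * i / (C * K))).card}
      ≤ ∫⁻ x, f x ∂μ := by
    refine le_trans (measure_mono hsub) ?_
    have := mul_meas_ge_le_lintegral₀ (μ := μ) hfmeas.aemeasurable 1
    simpa using this
  have hint : ∫⁻ x, f x ∂μ = ∑ j : Fin K, ∑ k ∈ Finset.Icc 1 K, ((k:ENNReal))⁻¹ * μ (D j k) := by
    rw [hfdef]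
    rw [lintegral_finset_sum _ (fun j _ => Finset.measurable_sum _ (fun k _ =>
      Measurable.indicator measurable_const ((hMmeas j k).diff (hMmeas j (k-1)))))]
    refine Finset.sum_congr rfl fun j _ => ?_
    rw [lintegral_finset_sum _ (fun k _ =>
      Measurable.indicator measurable_const ((hMmeas j k).diff (hMmeas j (k-1))))]
    refine Finset.sum_congr rfl fun k _ => ?_
    exact lintegral_indicator_const ((hMmeas j k).diff (hMmeas j (k-1))) _
  -- per-hypothesis bound via Abel summation
  have hper : ∀ j : Fin K, ∑ k ∈ Finset.Icc 1 K, ((k:ENNReal))⁻¹ * μ (D j k)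
      ≤ ENNReal.ofReal (α / K) := by
    intro j
    set m : ℕ → ℝ := fun k => (μ (M j k)).toReal with hmdef
    have hm0 : m 0 = 0 := by
      rw [hmdef]
      simp only [hMdef, if_pos rfl, measure_empty, ENNReal.toReal_zero]
    have hmono : ∀ k l : ℕ, k ≤ l → m k ≤ m l := fun k l hkl =>
      ENNReal.toReal_mono (measure_ne_top μ _) (measure_mono (hMmono j k l hkl))
    set c : ℝ := (1 + ε) * α / (C * K) with hcdef
    have hcpos : 0 < c := by rw [hcdef]; positivity
    have hbound : ∀ k, 1 ≤ k → k ≤ K → m k ≤ c * k := by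
      intro k h1 h2
      have := hMle j k h1 h2
      have h3 : m k ≤ (1 + ε) * (α * k / (C * K)) := by
        refine ENNReal.toReal_le_of_le_ofReal (by positivity) this
      calc m k ≤ (1 + ε) * (α * k / (C * K)) := h3
        _ = c * k := by rw [hcdef]; ring
    have hd : ∀ k ∈ Finset.Icc 1 K, ((k:ENNReal))⁻¹ * μ (D j k)
        = ENNReal.ofReal ((1/(k:ℝ)) * (m k - m (k-1))) := by
      intro k hk
      have h1 : 1 ≤ k := (Finset.mem_Icc.mp hk).1
      have hkR : (0:ℝ) < (k:ℝ) := by exact_mod_cast h1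
      have hsub' : M j (k-1) ⊆ M j k := hMmono j (k-1) k (by omega)
      have hdiff : μ (D j k) = μ (M j k) - μ (M j (k-1)) :=
        measure_diff hsub' (hMmeas j (k-1)).nullMeasurableSet (measure_ne_top μ _)
      have hDval : μ (D j k) = ENNReal.ofReal (m k - m (k-1)) := by
        rw [hdiff, hmdef]
        rw [← ENNReal.toReal_sub_of_le (measure_mono hsub') (measure_ne_top μ _)]
        rw [ENNReal.ofReal_toReal]
        exact (tsub_le_self.trans_lt (measure_lt_top μ _)).ne
      have hinv : ((k:ENNReal))⁻¹ = ENNReal.ofReal (1/(k:ℝ)) := by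
        rw [one_div, ENNReal.ofReal_inv_of_pos hkR, ENNReal.ofReal_natCast]
      rw [hDval, hinv, ← ENNReal.ofReal_mul (by positivity)]
    rw [Finset.sum_congr rfl hd,
      ← ENNReal.ofReal_sum_of_nonneg (fun k hk => by
        have h1 : 1 ≤ k := (Finset.mem_Icc.mp hk).1
        have hkR : (0:ℝ) < (k:ℝ) := by exact_mod_cast h1
        have h2 : 0 ≤ m k - m (k-1) := by
          have := hmono (k-1) k (by omega); linarith
        exact mul_nonneg (by positivity) h2)]
    apply ENNReal.ofReal_le_ofReal
    have habel := abel_sum c m K hK hm0 hbound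
    refine habel.trans ?_
    have : c * ∑ k ∈ Finset.Icc 1 K, (1/(k:ℝ)) = α / K := by
      rw [hcdef, hC]
      field_simp
    rw [this]
  -- put everything together
  refine hmarkov.trans ?_
  rw [hint]
  calc ∑ j : Fin K, ∑ k ∈ Finset.Icc 1 K, ((k:ENNReal))⁻¹ * μ (D j k)
      ≤ ∑ _j : Fin K, ENNReal.ofReal (α / K) := Finset.sum_le_sum (fun j _ => hper j)
    _ = (K : ENNReal) * ENNReal.ofReal (α / K) := by
        rw [Finset.sum_const, Finset.card_univ, Fintype.card_fin, nsmul_eq_mul]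
    _ = ENNReal.ofReal α := by
        rw [← ENNReal.ofReal_natCast K, ← ENNReal.ofReal_mul (by positivity)]
        congr 1
        field_simp
end

section
/- Conditional false alarm control of the Bonferroni-based conformal OOD test: Let Q̂^1, ..., Q̂^K be conformal p-values from a calibration set of size n_cal, and let r^i := P(Q̂^i ≤ α/((1+ε)K) | T_cal) ~ Beta(a, b) with a = ⌊(n_cal+1)·α/((1+ε)K)⌋, b = n_cal+1−a. If I_{(1+ε)μ}(a,b) ≥ 1 − δ/K where μ = a/(a+b), then with probability at least 1 − δ over the calibration set, the conditional probability of declaring OOD when all null hypotheses are true is at most α. -/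
open MeasureTheory
open scoped ENNReal

/- On the event that every `r i` is at most `t = (1+ε)·a/(a+b) ≤ α/K`, a union bound over the
`K` p-values bounds the conditional false alarm probability by `K·t ≤ α`. The Beta tail
hypothesis says each `r i` exceeds `t` with probability at most `δ/K`, so a second union bound
shows that this event has probability at least `1 - δ`. -/

lemma measure_iUnion_le_ofReal_card_mul {α ι : Type*} [MeasurableSpace α] [Fintype ι]
    (μ : Measure α) {s : ι → Set α} {p : ℝ} (h : ∀ i, μ (s i) ≤ ENNReal.ofReal p) :
    μ (⋃ i, s i) ≤ ENNReal.ofReal (Fintype.card ι * p) :=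
  calc μ (⋃ i, s i) ≤ ∑ i, μ (s i) := measure_iUnion_fintype_le μ s
    _ ≤ ∑ _i : ι, ENNReal.ofReal p := Finset.sum_le_sum fun i _ => h i
    _ = ENNReal.ofReal (Fintype.card ι * p) := by
      rw [Finset.sum_const, Finset.card_univ, nsmul_eq_mul,
        ENNReal.ofReal_mul (Nat.cast_nonneg _), ENNReal.ofReal_natCast]

lemma ofReal_one_sub_le_of_measure_compl_le {Ω : Type*} [MeasurableSpace Ω] {μ : Measure Ω}
    [IsProbabilityMeasure μ] {s : Set Ω} {δ : ℝ} (hδ : 0 ≤ δ)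
    (h : μ sᶜ ≤ ENNReal.ofReal δ) :
    ENNReal.ofReal (1 - δ) ≤ μ s := by
  rw [ENNReal.ofReal_sub _ hδ, ENNReal.ofReal_one, tsub_le_iff_right]
  calc 1 = μ Set.univ := measure_univ.symm
    _ ≤ μ s + μ sᶜ := measure_univ_le_add_compl s
    _ ≤ μ s + ENNReal.ofReal δ := by gcongr

lemma measure_lt_le_of_map_eq {Ω : Type*} [MeasurableSpace Ω] {μ : Measure Ω}
    [IsProbabilityMeasure μ] {X : Ω → ℝ} {ν : Measure ℝ} (hX : μ.map X = ν) {t p : ℝ}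
    (hp : p < 1) (htail : 1 - p ≤ (ν (Set.Iic t)).toReal) :
    μ {ω | t < X ω} ≤ ENNReal.ofReal p := by
  have hν : ν ≠ 0 := by
    rintro rfl
    simp only [Measure.coe_zero, Pi.zero_apply, ENNReal.toReal_zero] at htail
    linarith
  have hXm : AEMeasurable X μ := by
    by_contra h
    exact hν (hX ▸ Measure.map_of_not_aemeasurable h)
  have : IsProbabilityMeasure ν := hX ▸ Measure.isProbabilityMeasure_map hXm
  have hpre : μ {ω | t < X ω} = ν (Set.Iic t)ᶜ := by
    rw [Set.compl_Iic, ← hX, Measure.map_apply_of_aemeasurable hXm measurableSet_Ioi]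
    rfl
  rw [hpre, ← ENNReal.ofReal_toReal (measure_ne_top ν _)]
  refine ENNReal.ofReal_le_ofReal ?_
  rw [← Measure.real_def, probReal_compl_eq_one_sub measurableSet_Iic, Measure.real_def]
  linarith

lemma div_add_sub_le_of_le_mul {a N : ℕ} {c : ℝ} (ha : (a : ℝ) ≤ (N + 1) * c) :
    (a : ℝ) / (a + (N + 1 - a : ℕ)) ≤ c := by
  have hN : (0 : ℝ) < N + 1 := by positivity
  have hsum : (N : ℝ) + 1 ≤ a + (N + 1 - a : ℕ) := by
    exact_mod_cast (by omega : N + 1 ≤ a + (N + 1 - a))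
  calc (a : ℝ) / (a + (N + 1 - a : ℕ)) ≤ a / (N + 1) :=
        div_le_div_of_nonneg_left (Nat.cast_nonneg a) hN hsum
    _ ≤ c := (div_le_iff₀' hN).2 ha

theorem stmt18_general {Ωc Ωt : Type*} [MeasurableSpace Ωc] [MeasurableSpace Ωt]
    (μc : Measure Ωc) [IsProbabilityMeasure μc]
    (κ : Ωc → Measure Ωt) (hκ : ∀ ω, IsProbabilityMeasure (κ ω))
    (K n_cal : ℕ) (hK : 0 < K)
    (α δ ε : ℝ) (hδ : 0 < δ) (hε : 0 < ε)
    (Qhat : Fin K → Ωc → Ωt → ℝ)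
    (a b : ℕ)
    (ha : (a : ℝ) = ⌊(n_cal + 1 : ℝ) * (α / ((1 + ε) * K))⌋)
    (hb : b = n_cal + 1 - a)
    (r : Fin K → Ωc → ℝ)
    (hr : ∀ i ω, r i ω = ((κ ω) {x | Qhat i ω x ≤ α / ((1 + ε) * K)}).toReal)
    (hbeta : ∀ i : Fin K, μc.map (r i) = betaMeasure a b)
    (hI : 1 - δ / K ≤
      (betaMeasure a b (Set.Iic ((1 + ε) * ((a : ℝ) / (a + b))))).toReal) :
    ENNReal.ofReal (1 - δ) ≤ μc {ω |
      (κ ω) {x | ∃ i : Fin K, Qhat i ω x ≤ α / ((1 + ε) * K)}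
        ≤ ENNReal.ofReal α} := by
  set c := α / ((1 + ε) * K)
  set t := (1 + ε) * ((a : ℝ) / (a + b))
  rcases le_or_gt 1 δ with hδ1 | hδ1
  · simp [ENNReal.ofReal_eq_zero.2 (by linarith : 1 - δ ≤ 0)]
  have hKpos : (0 : ℝ) < K := by exact_mod_cast hK
  have hKt : K * t ≤ α := by
    have hmean : (a : ℝ) / (a + b) ≤ c := by
      subst hb
      exact div_add_sub_le_of_le_mul (ha ▸ Int.floor_le _)
    calc K * t ≤ K * ((1 + ε) * c) := by simp only [t]; gcongr
      _ = α := by simp only [c]; field_simp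
  set G := {ω | ∀ i, r i ω ≤ t}
  have hG : G ⊆ {ω | κ ω {x | ∃ i, Qhat i ω x ≤ c} ≤ ENNReal.ofReal α} := by
    intro ω hω
    have := hκ ω
    have hi i : κ ω {x | Qhat i ω x ≤ c} ≤ ENNReal.ofReal t :=
      (ENNReal.ofReal_toReal (measure_ne_top _ _)).symm.trans_le
        (ENNReal.ofReal_le_ofReal ((hr i ω).symm.trans_le (hω i)))
    rw [Set.mem_ofPred_eq, Set.ofPred_exists]
    refine (measure_iUnion_le_ofReal_card_mul (κ ω) hi).trans (ENNReal.ofReal_le_ofReal ?_)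
    simpa using hKt
  have hGc : μc Gᶜ ≤ ENNReal.ofReal δ := by
    have hδK : δ / K < 1 := (div_le_self hδ.le (by exact_mod_cast hK)).trans_lt hδ1
    have hi i : μc {ω | t < r i ω} ≤ ENNReal.ofReal (δ / K) :=
      measure_lt_le_of_map_eq (hbeta i) hδK hI
    have hGc_eq : Gᶜ = ⋃ i, {ω | t < r i ω} := by ext; simp [G]
    simpa [hGc_eq, mul_div_cancel₀ _ hKpos.ne'] using measure_iUnion_le_ofReal_card_mul μc hi
  exact (ofReal_one_sub_le_of_measure_compl_le hδ.le hGc).trans (measure_mono hG)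

/-- Conditional false alarm control of the Bonferroni-based conformal OOD test: with
probability at least 1−δ over the calibration set, the conditional probability of
declaring OOD (some conformal p-value ≤ α/((1+ε)K)) when all nulls are true is ≤ α. -/
theorem stmt18 {Ωc Ωt : Type*} [MeasurableSpace Ωc] [MeasurableSpace Ωt]
    (μc : Measure Ωc) [IsProbabilityMeasure μc]
    (κ : Ωc → Measure Ωt) (hκ : ∀ ω, IsProbabilityMeasure (κ ω))
    (K n_cal : ℕ) (hK : 0 < K)
    (α δ ε : ℝ) (hα : 0 < α) (hδ : 0 < δ) (hε : 0 < ε)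
    (Qhat : Fin K → Ωc → Ωt → ℝ)
    (a b : ℕ)
    (ha : (a : ℝ) = ⌊(n_cal + 1 : ℝ) * (α / ((1 + ε) * K))⌋)
    (hb : b = n_cal + 1 - a)
    (r : Fin K → Ωc → ℝ)
    (hr : ∀ i ω, r i ω = ((κ ω) {x | Qhat i ω x ≤ α / ((1 + ε) * K)}).toReal)
    (hbeta : ∀ i : Fin K, μc.map (r i) = betaMeasure a b)
    (hI : 1 - δ / K ≤
      (betaMeasure a b (Set.Iic ((1 + ε) * ((a : ℝ) / (a + b))))).toReal) :
    ENNReal.ofReal (1 - δ) ≤ μc {ω |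
      (κ ω) {x | ∃ i : Fin K, Qhat i ω x ≤ α / ((1 + ε) * K)}
        ≤ ENNReal.ofReal α} :=
  stmt18_general μc κ hκ K n_cal hK α δ ε hδ hε Qhat a b ha hb r hr hbeta hI
end
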